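/- arXiv:1602.06531 — 3 statements merged into one kernel-verified Lean document; each statement's English description precedes it below -/
import Mathlib

section
/- If a set family (hypothesis class) B of binary-valued functions can be written as a union of r classes, each of VC-dimension at most d (with d ≥ 1, r ≥ 1), then the VC-dimension of B is at most 4d·log₂(2d) + 2·log₂(r). -/
/-- A class `H` of binary-valued functions shatters a finite set `S`. -/
def Shatters {X : Type*} (H : Set (X → Bool)) (S : Finset X) : Prop :=
  ∀ f : X → Bool, ∃ h ∈ H, ∀ x ∈ S, h x = f x

/-- Sum of binomial coefficients bound. -/
lemma sum_choose_le_pow (m d : ℕ) :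
    ∑ k ∈ Finset.Iic d, m.choose k ≤ (m + 1) ^ d := by
  have h1 : Finset.Iic d = Finset.range (d + 1) := by
    ext k; simp [Nat.lt_succ_iff]
  rw [h1]
  calc ∑ k ∈ Finset.range (d + 1), m.choose k
      ≤ ∑ k ∈ Finset.range (d + 1), m ^ k * 1 ^ (d - k) * d.choose k := by
        apply Finset.sum_le_sum
        intro k hk
        rw [Finset.mem_range, Nat.lt_succ_iff] at hk
        have h2 : m.choose k ≤ m ^ k := Nat.choose_le_pow m k
        have h3 : 1 ≤ d.choose k := Nat.succ_le_of_lt (Nat.choose_pos hk)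
        calc m.choose k ≤ m ^ k := h2
          _ = m ^ k * 1 * 1 := by ring
          _ ≤ m ^ k * 1 ^ (d - k) * d.choose k := by
              simp only [one_pow, mul_one]
              exact Nat.le_mul_of_pos_right _ (Nat.choose_pos hk)
    _ = (m + 1) ^ d := (add_pow m 1 d).symm

/-- The arithmetic part: bootstrapping the logarithmic inequality. -/
lemma arith_part (m d : ℕ) (L : ℝ) (hL : 0 ≤ L) (hd : 1 ≤ d)
    (h : (m : ℝ) ≤ L + d * Real.logb 2 (m + 1)) :
    (m : ℝ) ≤ 4 * d * Real.logb 2 (2 * d) + 2 * L := by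
  set D : ℝ := (d : ℝ) with hD
  have hD1 : (1 : ℝ) ≤ D := by rw [hD]; exact_mod_cast hd
  have hDpos : (0 : ℝ) < D := by linarith
  have hlog2pos : (0 : ℝ) < Real.log 2 := Real.log_pos one_lt_two
  have hlog2lt : Real.log 2 < 1 := by
    have := Real.log_two_lt_d9; linarith
  have hlog2gt : (1 : ℝ) / 2 < Real.log 2 := by
    have := Real.log_two_gt_d9; linarith
  have hm1pos : (0 : ℝ) < (m : ℝ) + 1 := by positivity
  -- log (m+1) ≤ (m+1)/(4D) + log (4D) - 1
  have key : Real.log ((m : ℝ) + 1) ≤ ((m : ℝ) + 1) / (4 * D) + Real.log (4 * D) - 1 := by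
    have h4D : (0 : ℝ) < 4 * D := by linarith
    have h1 : Real.log (((m : ℝ) + 1) / (4 * D)) ≤ ((m : ℝ) + 1) / (4 * D) - 1 :=
      Real.log_le_sub_one_of_pos (by positivity)
    have h2 : Real.log (((m : ℝ) + 1) / (4 * D)) =
        Real.log ((m : ℝ) + 1) - Real.log (4 * D) :=
      Real.log_div (by positivity) (by positivity)
    linarith
  -- hence D * logb 2 (m+1) ≤ (m+1)/2 + D + D * logb 2 (2D) - D / log 2
  have hlogb : Real.logb 2 ((m : ℝ) + 1) = Real.log ((m : ℝ) + 1) / Real.log 2 := rfl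
  have h4D2D : Real.log (4 * D) = Real.log 2 + Real.log (2 * D) := by
    have : (4 : ℝ) * D = 2 * (2 * D) := by ring
    rw [this, Real.log_mul (by norm_num) (by positivity)]
  have hquart : ((m : ℝ) + 1) / (4 * Real.log 2) ≤ ((m : ℝ) + 1) / (2 * 1) := by
    apply div_le_div_of_nonneg_left (by linarith) (by norm_num) (by linarith)
  have step : D * Real.logb 2 ((m : ℝ) + 1) ≤
      ((m : ℝ) + 1) / 2 + D + D * Real.logb 2 (2 * D) - D / Real.log 2 := by
    have e1 : D * Real.logb 2 ((m : ℝ) + 1) = D * Real.log ((m : ℝ) + 1) / Real.log 2 := by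
      rw [hlogb]; ring
    rw [e1]
    have e2 : D * Real.log ((m : ℝ) + 1) / Real.log 2 ≤
        D * (((m : ℝ) + 1) / (4 * D) + Real.log (4 * D) - 1) / Real.log 2 := by
      gcongr
    refine e2.trans ?_
    have e3 : D * (((m : ℝ) + 1) / (4 * D) + Real.log (4 * D) - 1) / Real.log 2
        = ((m : ℝ) + 1) / (4 * Real.log 2) + D * (Real.log (4 * D) - 1) / Real.log 2 := by
      field_simp
      ring
    rw [e3, h4D2D]
    have e4 : D * (Real.log 2 + Real.log (2 * D) - 1) / Real.log 2
        = D + D * Real.logb 2 (2 * D) - D / Real.log 2 := by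
      rw [Real.logb]
      field_simp
    rw [e4]
    have : ((m : ℝ) + 1) / (2 * 1) = ((m : ℝ) + 1) / 2 := by norm_num
    linarith [hquart.trans_eq this]
  -- combine
  have hlogb2D : (1 : ℝ) ≤ Real.logb 2 (2 * D) := by
    have h2 : Real.logb 2 (2 : ℝ) = 1 := Real.logb_self_eq_one (by norm_num)
    calc (1 : ℝ) = Real.logb 2 2 := h2.symm
      _ ≤ Real.logb 2 (2 * D) := Real.logb_le_logb_of_le one_lt_two (by norm_num) (by linarith)
  have hDdiv : D ≤ D / Real.log 2 := by
    rw [le_div_iff₀ hlog2pos]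
    nlinarith
  have hDdiv2 : (1 : ℝ) ≤ D / Real.log 2 := by linarith
  -- m ≤ L + (m+1)/2 + D + D*logb2(2D) - D/log2
  have final : (m : ℝ) ≤ L + ((m : ℝ) + 1) / 2 + D + D * Real.logb 2 (2 * D) - D / Real.log 2 :=
    by linarith
  nlinarith [mul_le_mul_of_nonneg_left hlogb2D (by linarith : (0:ℝ) ≤ 2 * D)]

/-- If `B` is a union of `r` classes, each of VC-dimension at most `d` (`d ≥ 1`, `r ≥ 1`),
then the VC-dimension of `B` is at most `4 d log₂ (2 d) + 2 log₂ r`. -/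
theorem vc_dim_union {X : Type*} (r d : ℕ) (hd : 1 ≤ d) (hr : 1 ≤ r)
    (Hs : Fin r → Set (X → Bool))
    (hvc : ∀ i : Fin r, ∀ S : Finset X, Shatters (Hs i) S → S.card ≤ d) :
    ∀ S : Finset X, Shatters (⋃ i, Hs i) S →
      (S.card : ℝ) ≤ 4 * d * Real.logb 2 (2 * d) + 2 * Real.logb 2 r := by
  classical
  intro S hS
  set m := S.card with hm
  -- trace families on S
  let F : Fin r → Finset (Finset {x // x ∈ S}) := fun i =>
    Set.Finite.toFinset (Set.toFinite
      {T : Finset {x // x ∈ S} | ∃ h ∈ Hs i, ∀ x : {x // x ∈ S}, (x ∈ T ↔ h x.val = true)})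
  have hmemF : ∀ i T, T ∈ F i ↔
      ∃ h ∈ Hs i, ∀ x : {x // x ∈ S}, (x ∈ T ↔ h x.val = true) := by
    intro i T
    simp [F, Set.Finite.mem_toFinset]
  -- each F i has small vcDim
  have hvcF : ∀ i, (F i).vcDim ≤ d := by
    intro i
    apply Finset.sup_le
    intro T hT
    rw [Finset.mem_shatterer] at hT
    have hcard : (T.image Subtype.val).card = T.card :=
      Finset.card_image_of_injective _ Subtype.val_injective
    rw [← hcard]
    apply hvc i
    intro f
    obtain ⟨u, hu, hTu⟩ := hT (t := T.filter (fun x => f x.val = true)) (Finset.filter_subset _ _)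
    rw [hmemF] at hu
    obtain ⟨h, hh, hhu⟩ := hu
    refine ⟨h, hh, ?_⟩
    intro x hx
    rw [Finset.mem_image] at hx
    obtain ⟨y, hy, rfl⟩ := hx
    rw [Bool.eq_iff_iff, ← hhu y]
    constructor
    · intro hyu
      have : y ∈ T ∩ u := Finset.mem_inter.mpr ⟨hy, hyu⟩
      rw [hTu, Finset.mem_filter] at this
      exact this.2
    · intro hfy
      have : y ∈ T.filter (fun x => f x.val = true) := Finset.mem_filter.mpr ⟨hy, hfy⟩
      rw [← hTu, Finset.mem_inter] at this
      exact this.2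
  -- every subset of S is a trace of the union
  have hcover : (Finset.univ : Finset (Finset {x // x ∈ S})) ⊆
      Finset.univ.biUnion (fun i => F i) := by
    intro T _
    rw [Finset.mem_biUnion]
    set f : X → Bool := fun x => decide (∃ hx : x ∈ S, (⟨x, hx⟩ : {x // x ∈ S}) ∈ T) with hf
    obtain ⟨h, hh, hhf⟩ := hS f
    rw [Set.mem_iUnion] at hh
    obtain ⟨i, hi⟩ := hh
    refine ⟨i, Finset.mem_univ i, ?_⟩
    rw [hmemF]
    refine ⟨h, hi, ?_⟩
    intro x
    rw [hhf x.val x.prop, hf]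
    simp only [decide_eq_true_eq]
    constructor
    · intro hx; exact ⟨x.prop, by simpa using hx⟩
    · rintro ⟨hx, hxT⟩; simpa using hxT
  -- counting
  have hcount : 2 ^ m ≤ r * (m + 1) ^ d := by
    have h1 : (Finset.univ : Finset (Finset {x // x ∈ S})).card = 2 ^ m := by
      rw [Finset.card_univ, Fintype.card_finset, Fintype.card_coe]
    have h2 : ∀ i, (F i).card ≤ (m + 1) ^ d := by
      intro i
      calc (F i).card ≤ (F i).shatterer.card := Finset.card_le_card_shatterer _
        _ ≤ ∑ k ∈ Finset.Iic (F i).vcDim, (Fintype.card {x // x ∈ S}).choose k :=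
            Finset.card_shatterer_le_sum_vcDim
        _ ≤ ∑ k ∈ Finset.Iic d, (Fintype.card {x // x ∈ S}).choose k :=
            Finset.sum_le_sum_of_subset (Finset.Iic_subset_Iic.mpr (hvcF i))
        _ = ∑ k ∈ Finset.Iic d, m.choose k := by rw [Fintype.card_coe]
        _ ≤ (m + 1) ^ d := sum_choose_le_pow m d
    calc 2 ^ m = (Finset.univ : Finset (Finset {x // x ∈ S})).card := h1.symm
      _ ≤ (Finset.univ.biUnion (fun i => F i)).card := Finset.card_le_card hcover
      _ ≤ ∑ i : Fin r, (F i).card := Finset.card_biUnion_le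
      _ ≤ ∑ _i : Fin r, (m + 1) ^ d := Finset.sum_le_sum (fun i _ => h2 i)
      _ = r * (m + 1) ^ d := by rw [Finset.sum_const, Finset.card_univ, Fintype.card_fin,
            smul_eq_mul]
  -- pass to reals and logs
  have hrR : (1 : ℝ) ≤ (r : ℝ) := by exact_mod_cast hr
  have hL : 0 ≤ Real.logb 2 (r : ℝ) := Real.logb_nonneg one_lt_two hrR
  have hlog : (m : ℝ) ≤ Real.logb 2 (r : ℝ) + d * Real.logb 2 ((m : ℝ) + 1) := by
    have hcast : (2 : ℝ) ^ m ≤ (r : ℝ) * ((m : ℝ) + 1) ^ d := by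
      exact_mod_cast hcount
    have h1 : Real.logb 2 ((2 : ℝ) ^ m) ≤ Real.logb 2 ((r : ℝ) * ((m : ℝ) + 1) ^ d) :=
      Real.logb_le_logb_of_le one_lt_two (by positivity) hcast
    have h2 : Real.logb 2 ((2 : ℝ) ^ m) = m := by
      rw [Real.logb_pow, Real.logb_self_eq_one (by norm_num), mul_one]
    have h3 : Real.logb 2 ((r : ℝ) * ((m : ℝ) + 1) ^ d) =
        Real.logb 2 (r : ℝ) + d * Real.logb 2 ((m : ℝ) + 1) := by
      rw [Real.logb_mul (by positivity) (by positivity), Real.logb_pow]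
    rw [h2, h3] at h1
    exact h1
  have := arith_part m d (Real.logb 2 (r : ℝ)) hL hd hlog
  calc (m : ℝ) ≤ 4 * d * Real.logb 2 (2 * d) + 2 * Real.logb 2 (r : ℝ) := this
    _ = 4 * d * Real.logb 2 (2 * d) + 2 * Real.logb 2 r := by norm_num
end

section
/- Let K₁,…,K_N : X × X → ℝ be kernels and let 𝒦 be the set of all functions of the form ∑ᵢ wᵢKᵢ where ∑ᵢ wᵢ = 1 and at most k of the weights wᵢ are nonzero. Then the pseudodimension of 𝒦 is at most 2k·log₂(k) + 2k·log₂(4eN). -/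
/-
On a fixed support `T`, the combinations are linear combinations of `|T|` functions, and such a
class cannot pseudo-shatter `|T| + 1` points; by the Sauer–Shelah lemma it therefore realizes at
most `(n + 1) ^ |T|` threshold patterns on `n` points. As there are at most `(N + 1) ^ k` supports
of size at most `k`, pseudo-shattering `n` points forces `2 ^ n ≤ ((N + 1) (n + 1)) ^ k`, and
bounding `log (n + 1)` by a tangent line turns this into the stated bound.
-/

def PseudoShatters {X : Type*} (𝒦 : Set (X → X → ℝ)) (S : Finset (X × X)) : Prop :=
  ∃ t : X × X → ℝ, ∀ b : X × X → Bool, ∃ K ∈ 𝒦,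
    ∀ p ∈ S, (b p = true ↔ t p < K p.1 p.2)

open Finset Real

theorem Nat.sum_Iic_choose_le_succ_pow (m k : ℕ) : ∑ i ∈ Iic k, m.choose i ≤ (m + 1) ^ k := by
  rw [add_pow, ← Nat.range_succ_eq_Iic]
  refine sum_le_sum fun i hi => ?_
  calc m.choose i ≤ m ^ i := Nat.choose_le_pow m i
    _ ≤ m ^ i * 1 ^ (k - i) * k.choose i := by
      rw [one_pow, mul_one]
      exact Nat.le_mul_of_pos_right _ (Nat.choose_pos (Nat.lt_succ_iff.1 (mem_range.1 hi)))

theorem card_filter_card_le_le_succ_pow (ι : Type*) [Fintype ι] (k : ℕ) :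
    #{T : Finset ι | #T ≤ k} ≤ (Fintype.card ι + 1) ^ k := by
  classical
  calc #{T : Finset ι | #T ≤ k}
      ≤ #((Iic k).biUnion fun i : ℕ => powersetCard i (univ : Finset ι)) :=
        card_le_card fun T hT => mem_biUnion.2 ⟨#T, by simpa using hT, by simp⟩
    _ ≤ ∑ i ∈ Iic k, (Fintype.card ι).choose i :=
        card_biUnion_le.trans_eq (by simp only [card_powersetCard, card_univ])
    _ ≤ (Fintype.card ι + 1) ^ k := Nat.sum_Iic_choose_le_succ_pow _ _

theorem Real.log_le_div_add_log_sub_one {x c : ℝ} (hx : 0 < x) (hc : 0 < c) :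
    log x ≤ x / c + log c - 1 := by
  have := log_le_sub_one_of_pos (div_pos hx hc)
  rw [log_div hx.ne' hc.ne'] at this
  linarith

theorem mul_nonneg_of_pos_iff_pos {R : Type*} [Ring R] [LinearOrder R] [IsStrictOrderedRing R]
    {a x : R} (h : 0 < a ↔ 0 < x) : 0 ≤ a * x := by
  rcases lt_trichotomy a 0 with ha | rfl | ha
  · exact mul_nonneg_of_nonpos_of_nonpos ha.le (not_lt.1 (mt h.2 ha.not_gt))
  · simp
  · exact (mul_pos ha (h.1 ha)).le

section Threshold

variable {α ι : Type*} [Fintype α] [Fintype ι]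

noncomputable def thresholdSet (f : ι → α → ℝ) (τ : α → ℝ) (w : ι → ℝ) : Finset α :=
  univ.filter fun p => τ p < ∑ j, w j * f j p

theorem mem_thresholdSet {f : ι → α → ℝ} {τ : α → ℝ} {w : ι → ℝ} {p : α} :
    p ∈ thresholdSet f τ w ↔ τ p < ∑ j, w j * f j p := by
  simp [thresholdSet]

/-- A vector `v ≠ 0` orthogonal to every `f j` would make the patterns `{v > 0}` and `{v < 0}`
impossible to realize simultaneously: summing `± v p * (∑ j, w j * f j p - τ p) ≥ 0` gives
`0 < 0`. -/
theorem card_le_card_of_surjective_thresholdSet (f : ι → α → ℝ) (τ : α → ℝ)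
    (h : Function.Surjective (thresholdSet f τ)) : Fintype.card α ≤ Fintype.card ι := by
  classical
  by_contra! hlt
  obtain ⟨v, hv, hv0⟩ := Submodule.exists_mem_ne_zero_of_ne_bot
    ((Matrix.of f).mulVecLin.ker_ne_bot_of_finrank_lt (by simpa using hlt))
  set g : (ι → ℝ) → α → ℝ := fun w p => ∑ j, w j * f j p
  have orth : ∀ w, ∑ p, v p * g w p = 0 := by
    intro w
    have hv' : ∀ j, ∑ p, f j p * v p = 0 := fun j => congrFun hv j
    simp_rw [g, mul_sum]
    rw [sum_comm]
    simp [mul_left_comm (v _), ← mul_sum, mul_comm (v _), hv']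
  obtain ⟨w₁, hw₁⟩ := h {p | 0 < v p}
  obtain ⟨w₂, hw₂⟩ := h {p | v p < 0}
  have h₁ : ∀ p, 0 < v p ↔ 0 < g w₁ p - τ p := fun p => by
    rw [sub_pos, ← mem_thresholdSet, hw₁]; simp
  have h₂ : ∀ p, 0 < -v p ↔ 0 < g w₂ p - τ p := fun p => by
    rw [sub_pos, ← mem_thresholdSet, hw₂]; simp
  obtain ⟨p₀, hp₀⟩ := Function.ne_iff.1 hv0
  have hpos : 0 < ∑ p, (v p * (g w₁ p - τ p) + -v p * (g w₂ p - τ p)) := by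
    refine sum_pos' (fun p _ => add_nonneg (mul_nonneg_of_pos_iff_pos (h₁ p))
      (mul_nonneg_of_pos_iff_pos (h₂ p))) ⟨p₀, mem_univ _, ?_⟩
    rcases hp₀.lt_or_gt with hneg | hpos
    · exact add_pos_of_nonneg_of_pos (mul_nonneg_of_pos_iff_pos (h₁ p₀))
        (mul_pos (neg_pos.2 hneg) ((h₂ p₀).1 (neg_pos.2 hneg)))
    · exact add_pos_of_pos_of_nonneg (mul_pos hpos ((h₁ p₀).1 hpos))
        (mul_nonneg_of_pos_iff_pos (h₂ p₀))
  have hzero : ∑ p, (v p * (g w₁ p - τ p) + -v p * (g w₂ p - τ p)) = 0 := by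
    simp only [mul_sub, neg_mul, sum_add_distrib, sum_sub_distrib, sum_neg_distrib, orth]
    ring
  exact hpos.ne' hzero

open Classical in
noncomputable def thresholdPatterns (f : ι → α → ℝ) (τ : α → ℝ) : Finset (Finset α) :=
  univ.filter fun A => ∃ w, thresholdSet f τ w = A

theorem mem_thresholdPatterns {f : ι → α → ℝ} {τ : α → ℝ} {A : Finset α} :
    A ∈ thresholdPatterns f τ ↔ ∃ w, thresholdSet f τ w = A := by
  simp [thresholdPatterns]

theorem vcDim_thresholdPatterns_le [DecidableEq α] (f : ι → α → ℝ) (τ : α → ℝ) :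
    (thresholdPatterns f τ).vcDim ≤ Fintype.card ι := by
  refine Finset.sup_le fun s hs => ?_
  rw [← Fintype.card_coe]
  refine card_le_card_of_surjective_thresholdSet (fun j (p : s) => f j p) (fun p => τ p)
    fun C => ?_
  obtain ⟨u, hu, hsu⟩ := mem_shatterer.1 hs (map_subtype_subset C)
  obtain ⟨w, rfl⟩ := mem_thresholdPatterns.1 hu
  refine ⟨w, ext fun p => ?_⟩
  simpa [mem_thresholdSet, p.2] using congrArg ((p : α) ∈ ·) hsu

theorem card_thresholdPatterns_le (f : ι → α → ℝ) (τ : α → ℝ) :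
    #(thresholdPatterns f τ) ≤ (Fintype.card α + 1) ^ Fintype.card ι := by
  classical
  calc #(thresholdPatterns f τ) ≤ #(thresholdPatterns f τ).shatterer := card_le_card_shatterer _
    _ ≤ ∑ i ∈ Iic (thresholdPatterns f τ).vcDim, (Fintype.card α).choose i :=
      card_shatterer_le_sum_vcDim
    _ ≤ ∑ i ∈ Iic (Fintype.card ι), (Fintype.card α).choose i :=
      sum_le_sum_of_subset (Iic_subset_Iic.2 (vcDim_thresholdPatterns_le f τ))
    _ ≤ (Fintype.card α + 1) ^ Fintype.card ι := Nat.sum_Iic_choose_le_succ_pow _ _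

theorem thresholdSet_eq_of_support_subset {f : ι → α → ℝ} {τ : α → ℝ} {w : ι → ℝ}
    {T : Finset ι} (hT : ∀ i, w i ≠ 0 → i ∈ T) :
    thresholdSet (fun j : T => f j) τ (fun j => w j) = thresholdSet f τ w := by
  ext p
  rw [mem_thresholdSet, mem_thresholdSet, sum_coe_sort T fun i => w i * f i p,
    sum_subset (subset_univ T) fun i _ hi => by rw [not_imp_comm.1 (hT i) hi, zero_mul]]

theorem two_pow_card_le_of_forall_eq_sparse_thresholdSet (f : ι → α → ℝ) (τ : α → ℝ) (k : ℕ)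
    (h : ∀ C : Finset α, ∃ w : ι → ℝ, #{i | w i ≠ 0} ≤ k ∧ thresholdSet f τ w = C) :
    2 ^ Fintype.card α ≤ ((Fintype.card ι + 1) * (Fintype.card α + 1)) ^ k := by
  classical
  have hcover : (univ : Finset (Finset α)) ⊆
      (univ.filter fun T : Finset ι => #T ≤ k).biUnion fun T =>
        thresholdPatterns (fun j : T => f j) τ := by
    intro C _
    obtain ⟨w, hwk, rfl⟩ := h C
    refine mem_biUnion.2 ⟨univ.filter fun i => w i ≠ 0, by simpa using hwk, ?_⟩
    exact mem_thresholdPatterns.2 ⟨_, thresholdSet_eq_of_support_subset fun i hi => by simpa⟩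
  calc 2 ^ Fintype.card α = #(univ : Finset (Finset α)) := by simp [Fintype.card_finset]
    _ ≤ ∑ T ∈ {T : Finset ι | #T ≤ k}, #(thresholdPatterns (fun j : T => f j) τ) :=
      (card_le_card hcover).trans card_biUnion_le
    _ ≤ ∑ T ∈ {T : Finset ι | #T ≤ k}, (Fintype.card α + 1) ^ k := by
      refine sum_le_sum fun T hT => (card_thresholdPatterns_le _ _).trans ?_
      exact pow_le_pow_right₀ (by omega) (by simpa using hT)
    _ ≤ (Fintype.card ι + 1) ^ k * (Fintype.card α + 1) ^ k := by
      rw [sum_const, smul_eq_mul]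
      exact Nat.mul_le_mul_right _ (card_filter_card_le_le_succ_pow ι k)
    _ = ((Fintype.card ι + 1) * (Fintype.card α + 1)) ^ k := (mul_pow _ _ _).symm

end Threshold

theorem Real.neg_one_le_log_log_two : -1 ≤ log (log 2) := by
  have h2 : (log 2)⁻¹ < 2 := by
    rw [inv_lt_comm₀ (by positivity) two_pos]
    linarith [log_two_gt_d9]
  linarith [one_sub_inv_le_log_of_pos (by positivity : 0 < log 2)]

theorem cast_le_of_two_pow_le_mul_pow {n N k : ℕ} (hk : 1 ≤ k) (hN : 1 ≤ N)
    (h : 2 ^ n ≤ ((N + 1) * (n + 1)) ^ k) :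
    (n : ℝ) ≤ 2 * k * logb 2 k + 2 * k * logb 2 (4 * exp 1 * N) := by
  set L := log 2
  have hL : 1 / 2 < L := by have := log_two_gt_d9; linarith
  have hL1 : L < 1 := by have := log_two_lt_d9; linarith
  have hk' : (1 : ℝ) ≤ k := by exact_mod_cast hk
  have hN' : (1 : ℝ) ≤ N := by exact_mod_cast hN
  have hcount : n * L ≤ k * log (N + 1) + k * log (n + 1) := by
    have hcast : (2 : ℝ) ^ n ≤ ((N + 1) * (n + 1)) ^ k := by exact_mod_cast h
    have := log_le_log (by positivity) hcast
    rwa [log_pow, log_pow, log_mul (by positivity) (by positivity), mul_add] at this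
  have hlogN : log (N + 1) ≤ L + log N := by
    rw [← log_mul two_ne_zero (by positivity)]
    exact log_le_log (by positivity) (by linarith)
  -- the tangent to `log` at `2k / log 2` has slope `log 2 / (2k)`, which absorbs half of `n log 2`
  have hlogn : k * log (n + 1) ≤ (n + 1) * L / 2 + k * (L + log k - log L - 1) := by
    have := log_le_div_add_log_sub_one (x := n + 1) (by positivity)
      (show 0 < 2 * k / L by positivity)
    rw [log_div (by positivity) (by positivity), log_mul two_ne_zero (by positivity)] at this
    calc k * log (n + 1) ≤ k * ((n + 1) / (2 * k / L) + (L + log k - log L) - 1) :=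
          mul_le_mul_of_nonneg_left this (by positivity)
      _ = (n + 1) * L / 2 + k * (L + log k - log L - 1) := by field_simp; ring
  have h4eN : log (4 * exp 1 * N) = 2 * L + 1 + log N := by
    rw [log_mul (by positivity) (by positivity), log_mul (by positivity) (by positivity), log_exp,
      show (4 : ℝ) = 2 ^ 2 by norm_num, log_pow]
    push_cast; ring
  have key : n * L ≤ 2 * k * log k + 2 * k * log (4 * exp 1 * N) := by
    rw [h4eN]
    linarith [mul_le_mul_of_nonneg_left hlogN (by positivity : (0 : ℝ) ≤ k),
      mul_le_mul_of_nonneg_left neg_one_le_log_log_two (by positivity : (0 : ℝ) ≤ k)]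
  calc (n : ℝ) = n * L / L := by field_simp
    _ ≤ (2 * k * log k + 2 * k * log (4 * exp 1 * N)) / L := by gcongr
    _ = 2 * k * logb 2 k + 2 * k * logb 2 (4 * exp 1 * N) := by simp only [logb]; ring

/-- The family of `k`-sparse affine combinations of `N` kernels has pseudodimension at most
`2 k log₂ k + 2 k log₂ (4 e N)`. -/
theorem pseudodim_sparse_combinations {X : Type*} (N k : ℕ)
    (K : Fin N → X → X → ℝ)
    (𝒦 : Set (X → X → ℝ))
    (h𝒦 : 𝒦 = {F | ∃ w : Fin N → ℝ, (∑ i, w i = 1) ∧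
        (Finset.univ.filter fun i => w i ≠ 0).card ≤ k ∧
        F = fun x x' => ∑ i, w i * K i x x'}) :
    ∀ S : Finset (X × X), PseudoShatters 𝒦 S →
      (S.card : ℝ) ≤ 2 * k * Real.logb 2 k + 2 * k * Real.logb 2 (4 * Real.exp 1 * N) := by
  classical
  subst h𝒦
  rintro S ⟨t, ht⟩
  -- a member of `𝒦` has a nonzero weight, whence `1 ≤ k` and `1 ≤ N`
  obtain ⟨-, ⟨w, hw, hwk, -⟩, -⟩ := ht fun _ => true
  obtain ⟨i, -, hi⟩ := exists_ne_zero_of_sum_ne_zero (hw ▸ one_ne_zero)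
  have hk : 1 ≤ k := (card_pos.2 ⟨i, by simpa using hi⟩).trans_le hwk
  refine cast_le_of_two_pow_le_mul_pow hk i.pos ?_
  simpa using two_pow_card_le_of_forall_eq_sparse_thresholdSet
    (fun i (p : S) => K i p.1.1 p.1.2) (fun p => t p) k fun C => by
      obtain ⟨-, ⟨w, -, hwk, rfl⟩, hC⟩ :=
        ht fun p => decide (p ∈ C.map (Function.Embedding.subtype _))
      exact ⟨w, hwk, ext fun p => by simpa [mem_thresholdSet] using (hC p p.2).symm⟩
end

section
/- Let A and B be positive semidefinite real symmetric m×m matrices. Then the operator norm of A^{1/2} − B^{1/2} satisfies ‖A^{1/2} − B^{1/2}‖ ≤ √(‖A − B‖), where ‖·‖ denotes the spectral (operator) norm and A^{1/2}, B^{1/2} are the PSD square roots. -/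
open scoped Matrix.Norms.L2Operator

/-- The square root of a positive semidefinite matrix (as defined in Mathlib, Dec 2024). -/
noncomputable def Matrix.PosSemidef.sqrt {n : Type*} [Fintype n] [DecidableEq n]
    {A : Matrix n n ℝ} (hA : A.PosSemidef) : Matrix n n ℝ :=
  (hA.1.eigenvectorUnitary : Matrix n n ℝ) *
    Matrix.diagonal ((Real.sqrt ·) ∘ hA.1.eigenvalues) *
    (star hA.1.eigenvectorUnitary : Matrix n n ℝ)

/-!
Write `S = A^{1/2}`, `T = B^{1/2}`. Since `S - T` is symmetric, its spectral norm is the largest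
`|t|` over its eigenvalues `t`. For a unit eigenvector `v` of `t`, the identity
`A - B = S (S - T) + (S - T) T` gives `⟪v, (A - B) v⟫ = t (a + b)` with `a = ⟪v, S v⟫ ≥ 0`,
`b = ⟪v, T v⟫ ≥ 0` and `a - b = t`, so
`t² = (a - b)² ≤ |a² - b²| = |⟪v, (A - B) v⟫| ≤ ‖A - B‖`.
-/

open Matrix

lemma sq_sub_le_abs_sub_mul_add {a b : ℝ} (ha : 0 ≤ a) (hb : 0 ≤ b) :
    (a - b) ^ 2 ≤ |(a - b) * (a + b)| := by
  have hab : |a - b| ≤ a + b := abs_sub_le_iff.2 ⟨by linarith, by linarith⟩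
  rw [abs_mul, abs_of_nonneg (add_nonneg ha hb), ← sq_abs, sq]
  exact mul_le_mul_of_nonneg_left hab (abs_nonneg _)

namespace Matrix

variable {n : Type*} [Fintype n]

namespace PosSemidef

variable [DecidableEq n] {A : Matrix n n ℝ}

theorem posSemidef_sqrt (hA : A.PosSemidef) : hA.sqrt.PosSemidef := by
  have hD : (diagonal ((Real.sqrt ·) ∘ hA.1.eigenvalues)).PosSemidef :=
    posSemidef_diagonal_iff.mpr fun i => Real.sqrt_nonneg _
  simpa [Matrix.PosSemidef.sqrt, star_eq_conjTranspose] using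
    hD.mul_mul_conjTranspose_same (hA.1.eigenvectorUnitary : Matrix n n ℝ)

theorem sqrt_mul_self (hA : A.PosSemidef) : hA.sqrt * hA.sqrt = A := by
  conv_rhs => rw [hA.1.spectral_theorem, Unitary.conjStarAlgAut_apply]
  have hU : (star hA.1.eigenvectorUnitary : Matrix n n ℝ) *
      (hA.1.eigenvectorUnitary : Matrix n n ℝ) = 1 := by simp
  simp only [Matrix.PosSemidef.sqrt, Matrix.mul_assoc]
  rw [← Matrix.mul_assoc (star hA.1.eigenvectorUnitary : Matrix n n ℝ), hU, Matrix.one_mul,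
    ← Matrix.mul_assoc (diagonal _), diagonal_mul_diagonal]
  congr 3
  funext i
  simp [Real.mul_self_sqrt (hA.eigenvalues_nonneg i)]

end PosSemidef

lemma dotProduct_self_eq_norm_sq (v : EuclideanSpace ℝ n) : v ⬝ᵥ v = ‖v‖ ^ 2 := by
  rw [← real_inner_self_eq_norm_sq, EuclideanSpace.inner_eq_star_dotProduct, star_trivial]

lemma abs_dotProduct_mulVec_le [DecidableEq n] (M : Matrix n n ℝ) (v : EuclideanSpace ℝ n) :
    |v ⬝ᵥ M *ᵥ v| ≤ ‖M‖ * ‖v‖ ^ 2 := by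
  rw [← inner_toEuclideanCLM]
  calc _ ≤ ‖v‖ * ‖toEuclideanCLM (𝕜 := ℝ) M v‖ := abs_real_inner_le_norm _ _
    _ ≤ ‖v‖ * (‖M‖ * ‖v‖) := by gcongr; exact (toEuclideanCLM (𝕜 := ℝ) M).le_opNorm v
    _ = ‖M‖ * ‖v‖ ^ 2 := by ring

lemma IsHermitian.l2_opNorm_eq {𝕜 : Type*} [RCLike 𝕜] [DecidableEq n] {A : Matrix n n 𝕜}
    (hA : A.IsHermitian) : ‖A‖ = ‖hA.eigenvalues‖ := by
  conv_lhs => rw [hA.spectral_theorem, Unitary.conjStarAlgAut_apply, ← Unitary.coe_star]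
  rw [CStarRing.norm_mul_coe_unitary, CStarRing.norm_coe_unitary_mul, l2_opNorm_diagonal]
  simp [Pi.norm_def]

lemma dotProduct_mul_self_sub_mul_self_mulVec {R : Type*} [CommRing R] {S T : Matrix n n R}
    (hST : (S - T).IsSymm) {v : n → R} {t : R} (hv : (S - T) *ᵥ v = t • v) :
    v ⬝ᵥ (S * S - T * T) *ᵥ v = t * (v ⬝ᵥ S *ᵥ v + v ⬝ᵥ T *ᵥ v) := by
  have hdecomp : S * S - T * T = S * (S - T) + (S - T) * T := by noncomm_ring
  have hvecMul : v ᵥ* (S - T) = t • v := by rw [← mulVec_transpose, hST.eq, hv]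
  rw [hdecomp, add_mulVec, dotProduct_add, ← mulVec_mulVec, ← mulVec_mulVec, hv,
    dotProduct_mulVec v (S - T), hvecMul, mulVec_smul, dotProduct_smul, smul_dotProduct,
    smul_eq_mul, smul_eq_mul, mul_add]

lemma PosSemidef.sq_le_abs_dotProduct_mul_self_sub_mul_self_mulVec {S T : Matrix n n ℝ}
    (hS : S.PosSemidef) (hT : T.PosSemidef) {v : EuclideanSpace ℝ n} (hv : ‖v‖ = 1) {t : ℝ}
    (hvt : (S - T) *ᵥ v = t • v) : t ^ 2 ≤ |v ⬝ᵥ (S * S - T * T) *ᵥ v| := by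
  have hST : (S - T).IsSymm := (hS.1.sub hT.1).eq
  have ht : t = v ⬝ᵥ S *ᵥ v - v ⬝ᵥ T *ᵥ v := by
    rw [← dotProduct_sub, ← sub_mulVec, hvt, dotProduct_smul, dotProduct_self_eq_norm_sq, hv,
      one_pow, smul_eq_mul, mul_one]
  rw [dotProduct_mul_self_sub_mul_self_mulVec hST hvt, ht]
  exact sq_sub_le_abs_sub_mul_add (by simpa using hS.dotProduct_mulVec_nonneg v)
    (by simpa using hT.dotProduct_mulVec_nonneg v)


end Matrix

/-- For PSD real symmetric matrices `A`, `B`, the spectral norm satisfies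
`‖A^{1/2} − B^{1/2}‖ ≤ √‖A − B‖`. -/
theorem opNorm_sqrt_sub_sqrt_le {m : ℕ} (A B : Matrix (Fin m) (Fin m) ℝ)
    (hA : A.PosSemidef) (hB : B.PosSemidef) :
    ‖hA.sqrt - hB.sqrt‖ ≤ Real.sqrt ‖A - B‖ := by
  have hC : (hA.sqrt - hB.sqrt).IsHermitian := hA.posSemidef_sqrt.1.sub hB.posSemidef_sqrt.1
  rw [hC.l2_opNorm_eq, pi_norm_le_iff_of_nonneg (Real.sqrt_nonneg _)]
  intro i
  have hv : ‖hC.eigenvectorBasis i‖ = 1 := hC.eigenvectorBasis.orthonormal.1 i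
  have hsq : hC.eigenvalues i ^ 2 ≤ ‖A - B‖ := by
    have h := hA.posSemidef_sqrt.sq_le_abs_dotProduct_mul_self_sub_mul_self_mulVec
      hB.posSemidef_sqrt hv (hC.mulVec_eigenvectorBasis i)
    rw [hA.sqrt_mul_self, hB.sqrt_mul_self] at h
    simpa [hv] using h.trans (abs_dotProduct_mulVec_le (A - B) _)
  rw [Real.norm_eq_abs, ← Real.sqrt_sq_eq_abs]
  exact Real.sqrt_le_sqrt hsq
end
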